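/- arXiv:1401.2244 — 2 statements merged into one kernel-verified Lean document; each statement's English description precedes it below -/
import Mathlib

section
/- For every smooth function λ : ℝ² → ℝ, the following identity holds at every point of ℝ²: λ_xy(λ_yyyy − λ_xxxx) + 3(λ_yyy λ_xyy − λ_xxy λ_xxx) + 2(λ_yy λ_xyyy − λ_xx λ_xxxy) = ∂_y²(λ_xy λ_yy) − ∂_x²(λ_xy λ_xx) + (1/2) ∂_x ∂_y (λ_yy² − λ_xx²). In particular, the quadratic part of equation E(λ) = 0 is in divergence form. -/
open Real Finset

/-- Partial derivative with respect to the first variable. -/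
noncomputable def pdx (f : ℝ × ℝ → ℝ) : ℝ × ℝ → ℝ :=
  fun p => deriv (fun s => f (s, p.2)) p.1

/-- Partial derivative with respect to the second variable. -/
noncomputable def pdy (f : ℝ × ℝ → ℝ) : ℝ × ℝ → ℝ :=
  fun p => deriv (fun s => f (p.1, s)) p.2

lemma pdx_eq_fderiv (f : ℝ × ℝ → ℝ) (p : ℝ × ℝ) (hf : DifferentiableAt ℝ f p) :
    pdx f p = fderiv ℝ f p (1, 0) := by
  have h1 : HasDerivAt (fun s : ℝ => (s, p.2)) ((1 : ℝ), (0 : ℝ)) p.1 :=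
    (hasDerivAt_id p.1).prodMk (hasDerivAt_const p.1 p.2)
  exact (hf.hasFDerivAt.comp_hasDerivAt p.1 h1).deriv

lemma pdy_eq_fderiv (f : ℝ × ℝ → ℝ) (p : ℝ × ℝ) (hf : DifferentiableAt ℝ f p) :
    pdy f p = fderiv ℝ f p (0, 1) := by
  have h1 : HasDerivAt (fun s : ℝ => (p.1, s)) ((0 : ℝ), (1 : ℝ)) p.2 :=
    (hasDerivAt_const p.2 p.1).prodMk (hasDerivAt_id p.2)
  exact (hf.hasFDerivAt.comp_hasDerivAt p.2 h1).deriv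

lemma pdx_smooth {f : ℝ × ℝ → ℝ} (hf : ContDiff ℝ (⊤ : ℕ∞) f) : ContDiff ℝ (⊤ : ℕ∞) (pdx f) := by
  have : pdx f = fun p => fderiv ℝ f p (1, 0) :=
    funext fun p => pdx_eq_fderiv f p ((hf.differentiable (by simp)) p)
  rw [this]
  exact (hf.fderiv_right (by simp)).clm_apply contDiff_const

lemma pdy_smooth {f : ℝ × ℝ → ℝ} (hf : ContDiff ℝ (⊤ : ℕ∞) f) : ContDiff ℝ (⊤ : ℕ∞) (pdy f) := by
  have : pdy f = fun p => fderiv ℝ f p (0, 1) :=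
    funext fun p => pdy_eq_fderiv f p ((hf.differentiable (by simp)) p)
  rw [this]
  exact (hf.fderiv_right (by simp)).clm_apply contDiff_const

lemma pd_apply_eq (f : ℝ × ℝ → ℝ) (hf : ContDiff ℝ (⊤ : ℕ∞) f) (v w : ℝ × ℝ) (z : ℝ × ℝ) :
    fderiv ℝ (fun q => fderiv ℝ f q v) z w = fderiv ℝ (fderiv ℝ f) z w v := by
  have hd : ContDiff ℝ (⊤ : ℕ∞) (fderiv ℝ f) := hf.fderiv_right (by simp)
  have h := ((ContinuousLinearMap.apply ℝ ℝ v).hasFDerivAt.comp z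
    ((hd.differentiable (by simp) z).hasFDerivAt))
  have h2 : fderiv ℝ (fun q => fderiv ℝ f q v) z
      = ((ContinuousLinearMap.apply ℝ ℝ v).comp (fderiv ℝ (fderiv ℝ f) z)) := h.fderiv
  rw [h2]; rfl

lemma pd_comm {f : ℝ × ℝ → ℝ} (hf : ContDiff ℝ (⊤ : ℕ∞) f) (z : ℝ × ℝ) :
    pdx (pdy f) z = pdy (pdx f) z := by
  have hd : ContDiff ℝ (⊤ : ℕ∞) (fderiv ℝ f) := hf.fderiv_right (by simp)
  have hy : pdy f = fun p => fderiv ℝ f p (0, 1) :=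
    funext fun p => pdy_eq_fderiv f p ((hf.differentiable (by simp)) p)
  have hx : pdx f = fun p => fderiv ℝ f p (1, 0) :=
    funext fun p => pdx_eq_fderiv f p ((hf.differentiable (by simp)) p)
  have hsym : IsSymmSndFDerivAt ℝ f z := hf.contDiffAt.isSymmSndFDerivAt (by rw [minSmoothness_of_isRCLikeNormedField]; exact le_trans (by norm_num : (2 : WithTop ℕ∞) ≤ ((2 : ℕ∞) : WithTop ℕ∞)) (WithTop.coe_le_coe.mpr le_top))
  rw [hy, hx,
    pdx_eq_fderiv _ z (((hd.clm_apply contDiff_const).differentiable (by simp)) z),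
    pdy_eq_fderiv _ z (((hd.clm_apply contDiff_const).differentiable (by simp)) z),
    pd_apply_eq f hf, pd_apply_eq f hf]
  exact hsym.eq _ _

lemma pdx_mul {f g : ℝ × ℝ → ℝ} (hf : ContDiff ℝ (⊤ : ℕ∞) f) (hg : ContDiff ℝ (⊤ : ℕ∞) g) (z : ℝ × ℝ) :
    pdx (fun u => f u * g u) z = pdx f z * g z + f z * pdx g z := by
  have hc : Differentiable ℝ (fun s : ℝ => (s, z.2)) :=
    differentiable_id.prodMk (differentiable_const _)
  have h1 : DifferentiableAt ℝ (fun s : ℝ => f (s, z.2)) z.1 :=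
    ((hf.differentiable (by simp)) (z.1, z.2)).comp z.1 (hc z.1)
  have h2 : DifferentiableAt ℝ (fun s : ℝ => g (s, z.2)) z.1 :=
    ((hg.differentiable (by simp)) (z.1, z.2)).comp z.1 (hc z.1)
  simpa [pdx] using deriv_fun_mul h1 h2

lemma pdy_mul {f g : ℝ × ℝ → ℝ} (hf : ContDiff ℝ (⊤ : ℕ∞) f) (hg : ContDiff ℝ (⊤ : ℕ∞) g) (z : ℝ × ℝ) :
    pdy (fun u => f u * g u) z = pdy f z * g z + f z * pdy g z := by
  have hc : Differentiable ℝ (fun s : ℝ => (z.1, s)) :=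
    (differentiable_const _).prodMk differentiable_id
  have h1 : DifferentiableAt ℝ (fun s : ℝ => f (z.1, s)) z.2 :=
    ((hf.differentiable (by simp)) (z.1, z.2)).comp z.2 (hc z.2)
  have h2 : DifferentiableAt ℝ (fun s : ℝ => g (z.1, s)) z.2 :=
    ((hg.differentiable (by simp)) (z.1, z.2)).comp z.2 (hc z.2)
  simpa [pdy] using deriv_fun_mul h1 h2

lemma pdx_add {f g : ℝ × ℝ → ℝ} (hf : ContDiff ℝ (⊤ : ℕ∞) f) (hg : ContDiff ℝ (⊤ : ℕ∞) g) (z : ℝ × ℝ) :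
    pdx (fun u => f u + g u) z = pdx f z + pdx g z := by
  have hc : Differentiable ℝ (fun s : ℝ => (s, z.2)) :=
    differentiable_id.prodMk (differentiable_const _)
  have h1 : DifferentiableAt ℝ (fun s : ℝ => f (s, z.2)) z.1 :=
    ((hf.differentiable (by simp)) (z.1, z.2)).comp z.1 (hc z.1)
  have h2 : DifferentiableAt ℝ (fun s : ℝ => g (s, z.2)) z.1 :=
    ((hg.differentiable (by simp)) (z.1, z.2)).comp z.1 (hc z.1)
  simpa [pdx] using deriv_fun_add h1 h2

lemma pdy_add {f g : ℝ × ℝ → ℝ} (hf : ContDiff ℝ (⊤ : ℕ∞) f) (hg : ContDiff ℝ (⊤ : ℕ∞) g) (z : ℝ × ℝ) :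
    pdy (fun u => f u + g u) z = pdy f z + pdy g z := by
  have hc : Differentiable ℝ (fun s : ℝ => (z.1, s)) :=
    (differentiable_const _).prodMk differentiable_id
  have h1 : DifferentiableAt ℝ (fun s : ℝ => f (z.1, s)) z.2 :=
    ((hf.differentiable (by simp)) (z.1, z.2)).comp z.2 (hc z.2)
  have h2 : DifferentiableAt ℝ (fun s : ℝ => g (z.1, s)) z.2 :=
    ((hg.differentiable (by simp)) (z.1, z.2)).comp z.2 (hc z.2)
  simpa [pdy] using deriv_fun_add h1 h2

lemma pdy_sub {f g : ℝ × ℝ → ℝ} (hf : ContDiff ℝ (⊤ : ℕ∞) f) (hg : ContDiff ℝ (⊤ : ℕ∞) g) (z : ℝ × ℝ) :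
    pdy (fun u => f u - g u) z = pdy f z - pdy g z := by
  have hc : Differentiable ℝ (fun s : ℝ => (z.1, s)) :=
    (differentiable_const _).prodMk differentiable_id
  have h1 : DifferentiableAt ℝ (fun s : ℝ => f (z.1, s)) z.2 :=
    ((hf.differentiable (by simp)) (z.1, z.2)).comp z.2 (hc z.2)
  have h2 : DifferentiableAt ℝ (fun s : ℝ => g (z.1, s)) z.2 :=
    ((hg.differentiable (by simp)) (z.1, z.2)).comp z.2 (hc z.2)
  simpa [pdy] using deriv_fun_sub h1 h2

lemma pdx_sub {f g : ℝ × ℝ → ℝ} (hf : ContDiff ℝ (⊤ : ℕ∞) f) (hg : ContDiff ℝ (⊤ : ℕ∞) g) (z : ℝ × ℝ) :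
    pdx (fun u => f u - g u) z = pdx f z - pdx g z := by
  have hc : Differentiable ℝ (fun s : ℝ => (s, z.2)) :=
    differentiable_id.prodMk (differentiable_const _)
  have h1 : DifferentiableAt ℝ (fun s : ℝ => f (s, z.2)) z.1 :=
    ((hf.differentiable (by simp)) (z.1, z.2)).comp z.1 (hc z.1)
  have h2 : DifferentiableAt ℝ (fun s : ℝ => g (s, z.2)) z.1 :=
    ((hg.differentiable (by simp)) (z.1, z.2)).comp z.1 (hc z.1)
  simpa [pdx] using deriv_fun_sub h1 h2

theorem quadratic_part_in_divergence_form
    (lam : ℝ × ℝ → ℝ) (hlam : ContDiff ℝ (⊤ : ℕ∞) lam) :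
    ∀ z, pdy (pdx lam) z * (pdy (pdy (pdy (pdy lam))) z - pdx (pdx (pdx (pdx lam))) z)
      + 3 * (pdy (pdy (pdy lam)) z * pdy (pdy (pdx lam)) z
        - pdy (pdx (pdx lam)) z * pdx (pdx (pdx lam)) z)
      + 2 * (pdy (pdy lam) z * pdy (pdy (pdy (pdx lam))) z
        - pdx (pdx lam) z * pdy (pdx (pdx (pdx lam))) z)
    = pdy (pdy (fun u => pdy (pdx lam) u * pdy (pdy lam) u)) z
      - pdx (pdx (fun u => pdy (pdx lam) u * pdx (pdx lam) u)) z
      + (1 / 2) * pdy (pdx (fun u => (pdy (pdy lam) u) ^ 2 - (pdx (pdx lam) u) ^ 2)) z := by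
  intro z
  have h1 : ContDiff ℝ (⊤ : ℕ∞) (pdx lam) := pdx_smooth hlam
  have h2 : ContDiff ℝ (⊤ : ℕ∞) (pdy lam) := pdy_smooth hlam
  have hA : ContDiff ℝ (⊤ : ℕ∞) (pdx (pdx lam)) := pdx_smooth h1
  have hB : ContDiff ℝ (⊤ : ℕ∞) (pdy (pdx lam)) := pdy_smooth h1
  have hC : ContDiff ℝ (⊤ : ℕ∞) (pdy (pdy lam)) := pdy_smooth h2
  have hAx : ContDiff ℝ (⊤ : ℕ∞) (pdx (pdx (pdx lam))) := pdx_smooth hA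
  have hAy : ContDiff ℝ (⊤ : ℕ∞) (pdy (pdx (pdx lam))) := pdy_smooth hA
  have hBy : ContDiff ℝ (⊤ : ℕ∞) (pdy (pdy (pdx lam))) := pdy_smooth hB
  have hCy : ContDiff ℝ (⊤ : ℕ∞) (pdy (pdy (pdy lam))) := pdy_smooth hC
  have e1 : pdy (pdy (fun u => pdy (pdx lam) u * pdy (pdy lam) u)) z
      = pdy (pdy (pdy (pdx lam))) z * pdy (pdy lam) z
        + 2 * (pdy (pdy (pdx lam)) z * pdy (pdy (pdy lam)) z)
        + pdy (pdx lam) z * pdy (pdy (pdy (pdy lam))) z := by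
    rw [show pdy (fun u => pdy (pdx lam) u * pdy (pdy lam) u)
        = fun u => pdy (pdy (pdx lam)) u * pdy (pdy lam) u
            + pdy (pdx lam) u * pdy (pdy (pdy lam)) u
        from funext fun u => pdy_mul hB hC u]
    rw [pdy_add (hBy.mul hC) (hB.mul hCy) z, pdy_mul hBy hC z, pdy_mul hB hCy z]
    ring
  have e2 : pdx (pdx (fun u => pdy (pdx lam) u * pdx (pdx lam) u)) z
      = pdy (pdx (pdx (pdx lam))) z * pdx (pdx lam) z
        + 2 * (pdy (pdx (pdx lam)) z * pdx (pdx (pdx lam)) z)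
        + pdy (pdx lam) z * pdx (pdx (pdx (pdx lam))) z := by
    rw [show pdx (fun u => pdy (pdx lam) u * pdx (pdx lam) u)
        = fun u => pdy (pdx (pdx lam)) u * pdx (pdx lam) u
            + pdy (pdx lam) u * pdx (pdx (pdx lam)) u
        from funext fun u => by
          rw [pdx_mul hB hA u, pd_comm h1 u]]
    rw [pdx_add (hAy.mul hA) (hB.mul hAx) z, pdx_mul hAy hA z, pdx_mul hB hAx z,
      pd_comm hA z, pd_comm h1 z]
    ring
  have hcomm : pdx (pdy (pdy lam)) = pdy (pdy (pdx lam)) := by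
    funext u
    rw [pd_comm h2 u, show pdx (pdy lam) = pdy (pdx lam) from funext fun w => pd_comm hlam w]
  have e3 : pdy (pdx (fun u => (pdy (pdy lam) u) ^ 2 - (pdx (pdx lam) u) ^ 2)) z
      = 2 * (pdy (pdy (pdy lam)) z * pdy (pdy (pdx lam)) z
          + pdy (pdy lam) z * pdy (pdy (pdy (pdx lam))) z
          - pdy (pdx (pdx lam)) z * pdx (pdx (pdx lam)) z
          - pdx (pdx lam) z * pdy (pdx (pdx (pdx lam))) z) := by
    rw [show (fun u => (pdy (pdy lam) u) ^ 2 - (pdx (pdx lam) u) ^ 2)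
        = fun u => pdy (pdy lam) u * pdy (pdy lam) u - pdx (pdx lam) u * pdx (pdx lam) u
        from funext fun u => by ring]
    rw [show pdx (fun u => pdy (pdy lam) u * pdy (pdy lam) u
            - pdx (pdx lam) u * pdx (pdx lam) u)
        = fun u => (pdy (pdy (pdx lam)) u * pdy (pdy lam) u
              + pdy (pdy lam) u * pdy (pdy (pdx lam)) u)
            - (pdx (pdx (pdx lam)) u * pdx (pdx lam) u
              + pdx (pdx lam) u * pdx (pdx (pdx lam)) u)
        from funext fun u => by
          rw [pdx_sub (hC.mul hC) (hA.mul hA) u, pdx_mul hC hC u, pdx_mul hA hA u, hcomm]]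
    rw [pdy_sub ((hBy.mul hC).add (hC.mul hBy)) ((hAx.mul hA).add (hA.mul hAx)) z,
      pdy_add (hBy.mul hC) (hC.mul hBy) z, pdy_add (hAx.mul hA) (hA.mul hAx) z,
      pdy_mul hBy hC z, pdy_mul hC hBy z, pdy_mul hAx hA z, pdy_mul hA hAx z]
    ring
  rw [e1, e2, e3]
  ring
end

section
/- Let f, g : ℝ² → ℝ be smooth functions that are 2π-periodic in x and in y and invariant under each of the maps (x,y) ↦ (−x,y), (x,y) ↦ (x,−y), and (x,y) ↦ (y,x). Then for all integers m, n with m·n·(m−n)·(m+n) = 0, the Fourier coefficient of ⟨f, g⟩ at the mode (m, n) vanishes: ∫₀^{2π} ∫₀^{2π} ⟨f, g⟩(x,y) e^{−i(mx+ny)} dx dy = 0. In particular the Fourier expansion of ⟨f, g⟩ contains no monomials of the form e^{inx}, e^{iny}, e^{in(x+y)}, e^{in(x−y)}. -/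
open Real Finset

/-- The bilinear expression `⟨f, g⟩` from the recursion of Theorem 7. -/
noncomputable def bra (f g : ℝ × ℝ → ℝ) : ℝ × ℝ → ℝ :=
  fun z => pdy (pdx f) z * (pdy (pdy (pdy (pdy g))) z - pdx (pdx (pdx (pdx g))) z)
    + 3 * (pdy (pdy (pdy f)) z * pdy (pdy (pdx g)) z
      - pdx (pdx (pdx f)) z * pdy (pdx (pdx g)) z)
    + 2 * (pdy (pdy f) z * pdy (pdy (pdy (pdx g))) z
      - pdx (pdx f) z * pdy (pdx (pdx (pdx g))) z)

section aux
open Real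
variable {u : ℝ × ℝ → ℝ}

lemma hasDerivAt_slice_x (hu : Differentiable ℝ u) (p : ℝ × ℝ) :
    HasDerivAt (fun s => u (s, p.2)) (fderiv ℝ u p ((1:ℝ), (0:ℝ))) p.1 := by
  have h1 : HasDerivAt (fun s : ℝ => (s, p.2)) ((1:ℝ), (0:ℝ)) p.1 :=
    (hasDerivAt_id p.1).prodMk (hasDerivAt_const p.1 p.2)
  have h2 := (hu p).hasFDerivAt.comp_hasDerivAt p.1 h1
  exact h2

lemma hasDerivAt_slice_y (hu : Differentiable ℝ u) (p : ℝ × ℝ) :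
    HasDerivAt (fun s => u (p.1, s)) (fderiv ℝ u p ((0:ℝ), (1:ℝ))) p.2 := by
  have h1 : HasDerivAt (fun s : ℝ => (p.1, s)) ((0:ℝ), (1:ℝ)) p.2 :=
    (hasDerivAt_const p.2 p.1).prodMk (hasDerivAt_id p.2)
  have h2 := (hu p).hasFDerivAt.comp_hasDerivAt p.2 h1
  exact h2

lemma pdx_eq (hu : Differentiable ℝ u) : pdx u = fun p => fderiv ℝ u p ((1:ℝ), (0:ℝ)) := by
  funext p; exact (hasDerivAt_slice_x hu p).deriv

lemma pdy_eq (hu : Differentiable ℝ u) : pdy u = fun p => fderiv ℝ u p ((0:ℝ), (1:ℝ)) := by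
  funext p; exact (hasDerivAt_slice_y hu p).deriv

lemma contDiff_pdx (hu : ContDiff ℝ (⊤ : ℕ∞) u) : ContDiff ℝ (⊤ : ℕ∞) (pdx u) := by
  rw [pdx_eq (hu.differentiable (by simp))]
  exact (hu.fderiv_right (by simp)).clm_apply contDiff_const

lemma contDiff_pdy (hu : ContDiff ℝ (⊤ : ℕ∞) u) : ContDiff ℝ (⊤ : ℕ∞) (pdy u) := by
  rw [pdy_eq (hu.differentiable (by simp))]
  exact (hu.fderiv_right (by simp)).clm_apply contDiff_const

lemma pdx_pdy_comm (hu : ContDiff ℝ (⊤ : ℕ∞) u) : pdx (pdy u) = pdy (pdx u) := by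
  have hdu : Differentiable ℝ u := hu.differentiable (by simp)
  have hF : ContDiff ℝ (⊤ : ℕ∞) (fderiv ℝ u) := hu.fderiv_right (by simp)
  have hdF : Differentiable ℝ (fderiv ℝ u) := hF.differentiable (by simp)
  funext p
  have e1 : pdx (pdy u) p = fderiv ℝ (fderiv ℝ u) p ((1:ℝ),(0:ℝ)) ((0:ℝ),(1:ℝ)) := by
    rw [pdy_eq hdu]
    show deriv (fun s => fderiv ℝ u (s, p.2) ((0:ℝ),(1:ℝ))) p.1 = _
    have h1 : HasDerivAt (fun s : ℝ => (s, p.2)) ((1:ℝ), (0:ℝ)) p.1 :=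
      (hasDerivAt_id p.1).prodMk (hasDerivAt_const p.1 p.2)
    have h2 := (hdF p).hasFDerivAt.comp_hasDerivAt p.1 h1
    have h3 := ((ContinuousLinearMap.apply ℝ ℝ ((0:ℝ),(1:ℝ))).hasFDerivAt.comp_hasDerivAt p.1 h2)
    exact h3.deriv
  have e2 : pdy (pdx u) p = fderiv ℝ (fderiv ℝ u) p ((0:ℝ),(1:ℝ)) ((1:ℝ),(0:ℝ)) := by
    rw [pdx_eq hdu]
    show deriv (fun s => fderiv ℝ u (p.1, s) ((1:ℝ),(0:ℝ))) p.2 = _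
    have h1 : HasDerivAt (fun s : ℝ => (p.1, s)) ((0:ℝ), (1:ℝ)) p.2 :=
      (hasDerivAt_const p.2 p.1).prodMk (hasDerivAt_id p.2)
    have h2 := (hdF p).hasFDerivAt.comp_hasDerivAt p.2 h1
    have h3 := ((ContinuousLinearMap.apply ℝ ℝ ((1:ℝ),(0:ℝ))).hasFDerivAt.comp_hasDerivAt p.2 h2)
    exact h3.deriv
  rw [e1, e2, (hu.contDiffAt.isSymmSndFDerivAt (by rw [minSmoothness_of_isRCLikeNormedField]; exact WithTop.coe_le_coe.mpr (le_top : (2 : ℕ∞) ≤ ⊤))) _ _]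

-- negation in x
lemma pdx_negx : pdx (fun q => u (-q.1, q.2)) = fun q => -pdx u (-q.1, q.2) := by
  funext p
  show deriv (fun s => u (-s, p.2)) p.1 = _
  simpa [pdx] using deriv_comp_neg (f := fun s => u (s, p.2)) (x := p.1)
lemma pdy_negx : pdy (fun q => u (-q.1, q.2)) = fun q => pdy u (-q.1, q.2) := rfl

-- negation in y
lemma pdx_negy : pdx (fun q => u (q.1, -q.2)) = fun q => pdx u (q.1, -q.2) := rfl
lemma pdy_negy : pdy (fun q => u (q.1, -q.2)) = fun q => -pdy u (q.1, -q.2) := by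
  funext p
  show deriv (fun s => u (p.1, -s)) p.2 = _
  simpa [pdy] using deriv_comp_neg (f := fun s => u (p.1, s)) (x := p.2)

-- shifts
lemma pdx_shiftx {c : ℝ} : pdx (fun q => u (q.1 + c, q.2)) = fun q => pdx u (q.1 + c, q.2) := by
  funext p
  show deriv (fun s => u (s + c, p.2)) p.1 = _
  simpa [pdx] using deriv_comp_add_const (f := fun s => u (s, p.2)) (a := c) (x := p.1)
lemma pdy_shiftx {c : ℝ} : pdy (fun q => u (q.1 + c, q.2)) = fun q => pdy u (q.1 + c, q.2) := rfl
lemma pdx_shifty {c : ℝ} : pdx (fun q => u (q.1, q.2 + c)) = fun q => pdx u (q.1, q.2 + c) := rfl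
lemma pdy_shifty {c : ℝ} : pdy (fun q => u (q.1, q.2 + c)) = fun q => pdy u (q.1, q.2 + c) := by
  funext p
  show deriv (fun s => u (p.1, s + c)) p.2 = _
  simpa [pdy] using deriv_comp_add_const (f := fun s => u (p.1, s)) (a := c) (x := p.2)

lemma pdx_neg : pdx (fun q => -u q) = fun q => -pdx u q := by
  funext p; show deriv (fun s => -u (s, p.2)) p.1 = _; simp [pdx, deriv.neg]
lemma pdy_neg : pdy (fun q => -u q) = fun q => -pdy u q := by
  funext p; show deriv (fun s => -u (p.1, s)) p.2 = _; simp [pdy, deriv.neg]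

def EvX (u : ℝ × ℝ → ℝ) : Prop := ∀ p : ℝ × ℝ, u (-p.1, p.2) = u p
def OdX (u : ℝ × ℝ → ℝ) : Prop := ∀ p : ℝ × ℝ, u (-p.1, p.2) = -u p
def EvY (u : ℝ × ℝ → ℝ) : Prop := ∀ p : ℝ × ℝ, u (p.1, -p.2) = u p
def OdY (u : ℝ × ℝ → ℝ) : Prop := ∀ p : ℝ × ℝ, u (p.1, -p.2) = -u p
def PerX (u : ℝ × ℝ → ℝ) : Prop := ∀ p : ℝ × ℝ, u (p.1 + 2 * π, p.2) = u p
def PerY (u : ℝ × ℝ → ℝ) : Prop := ∀ p : ℝ × ℝ, u (p.1, p.2 + 2 * π) = u p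


lemma evx_pdx (h : EvX u) : OdX (pdx u) := by
  have e : pdx u = fun q => -pdx u (-q.1, q.2) := by
    conv_lhs => rw [← funext h, pdx_negx]
  intro p; have := congrFun e p; linarith

lemma odx_pdx (h : OdX u) : EvX (pdx u) := by
  have e : (fun q : ℝ × ℝ => -pdx u (-q.1, q.2)) = fun q => -pdx u q := by
    rw [← pdx_negx, funext h, pdx_neg]
  intro p; have := congrFun e p; linarith

lemma evx_pdy (h : EvX u) : EvX (pdy u) := by
  have e : pdy u = fun q => pdy u (-q.1, q.2) := by
    conv_lhs => rw [← funext h, pdy_negx]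
  intro p; exact (congrFun e p).symm

lemma odx_pdy (h : OdX u) : OdX (pdy u) := by
  have e : (fun q : ℝ × ℝ => pdy u (-q.1, q.2)) = fun q => -pdy u q := by
    rw [← pdy_negx, funext h, pdy_neg]
  intro p; exact congrFun e p

lemma evy_pdy (h : EvY u) : OdY (pdy u) := by
  have e : pdy u = fun q => -pdy u (q.1, -q.2) := by
    conv_lhs => rw [← funext h, pdy_negy]
  intro p; have := congrFun e p; linarith

lemma ody_pdy (h : OdY u) : EvY (pdy u) := by
  have e : (fun q : ℝ × ℝ => -pdy u (q.1, -q.2)) = fun q => -pdy u q := by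
    rw [← pdy_negy, funext h, pdy_neg]
  intro p; have := congrFun e p; linarith

lemma evy_pdx (h : EvY u) : EvY (pdx u) := by
  have e : pdx u = fun q => pdx u (q.1, -q.2) := by
    conv_lhs => rw [← funext h, pdx_negy]
  intro p; exact (congrFun e p).symm

lemma perx_pdx (h : PerX u) : PerX (pdx u) := by
  have e : pdx u = fun q => pdx u (q.1 + 2 * π, q.2) := by
    conv_lhs => rw [← funext h, pdx_shiftx]
  intro p; exact (congrFun e p).symm

lemma perx_pdy (h : PerX u) : PerX (pdy u) := by
  have e : pdy u = fun q => pdy u (q.1 + 2 * π, q.2) := by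
    conv_lhs => rw [← funext h, pdy_shiftx]
  intro p; exact (congrFun e p).symm

lemma pery_pdx (h : PerY u) : PerY (pdx u) := by
  have e : pdx u = fun q => pdx u (q.1, q.2 + 2 * π) := by
    conv_lhs => rw [← funext h, pdx_shifty]
  intro p; exact (congrFun e p).symm

lemma pery_pdy (h : PerY u) : PerY (pdy u) := by
  have e : pdy u = fun q => pdy u (q.1, q.2 + 2 * π) := by
    conv_lhs => rw [← funext h, pdy_shifty]
  intro p; exact (congrFun e p).symm

section brasym
variable {f g : ℝ × ℝ → ℝ}

lemma bra_odY (hfY : EvY f) (hgY : EvY g) : OdY (bra f g) := by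
  intro p
  have a1 := evy_pdy (evy_pdx hfY) p
  have a2 := evy_pdy (ody_pdy (evy_pdy hfY)) p
  have a3 := evy_pdx (evy_pdx (evy_pdx hfY)) p
  have a4 := ody_pdy (evy_pdy hfY) p
  have a5 := evy_pdx (evy_pdx hfY) p
  have b1 := ody_pdy (evy_pdy (ody_pdy (evy_pdy hgY))) p
  have b2 := evy_pdx (evy_pdx (evy_pdx (evy_pdx hgY))) p
  have b3 := ody_pdy (evy_pdy (evy_pdx hgY)) p
  have b4 := evy_pdy (evy_pdx (evy_pdx hgY)) p
  have b5 := evy_pdy (ody_pdy (evy_pdy (evy_pdx hgY))) p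
  have b6 := evy_pdy (evy_pdx (evy_pdx (evy_pdx hgY))) p
  simp only [bra]
  rw [a1, a2, a3, a4, a5, b1, b2, b3, b4, b5, b6]; ring

lemma bra_odX (hfX : EvX f) (hgX : EvX g) : OdX (bra f g) := by
  intro p
  have a1 := odx_pdy (evx_pdx hfX) p
  have a2 := evx_pdy (evx_pdy (evx_pdy hfX)) p
  have a3 := evx_pdx (odx_pdx (evx_pdx hfX)) p
  have a4 := evx_pdy (evx_pdy hfX) p
  have a5 := odx_pdx (evx_pdx hfX) p
  have b1 := evx_pdy (evx_pdy (evx_pdy (evx_pdy hgX))) p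
  have b2 := odx_pdx (evx_pdx (odx_pdx (evx_pdx hgX))) p
  have b3 := odx_pdy (odx_pdy (evx_pdx hgX)) p
  have b4 := evx_pdy (odx_pdx (evx_pdx hgX)) p
  have b5 := odx_pdy (odx_pdy (odx_pdy (evx_pdx hgX))) p
  have b6 := odx_pdy (evx_pdx (odx_pdx (evx_pdx hgX))) p
  simp only [bra]
  rw [a1, a2, a3, a4, a5, b1, b2, b3, b4, b5, b6]; ring

lemma bra_perX (hfX : PerX f) (hgX : PerX g) : PerX (bra f g) := by
  intro p
  have a1 := perx_pdy (perx_pdx hfX) p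
  have a2 := perx_pdy (perx_pdy (perx_pdy hfX)) p
  have a3 := perx_pdx (perx_pdx (perx_pdx hfX)) p
  have a4 := perx_pdy (perx_pdy hfX) p
  have a5 := perx_pdx (perx_pdx hfX) p
  have b1 := perx_pdy (perx_pdy (perx_pdy (perx_pdy hgX))) p
  have b2 := perx_pdx (perx_pdx (perx_pdx (perx_pdx hgX))) p
  have b3 := perx_pdy (perx_pdy (perx_pdx hgX)) p
  have b4 := perx_pdy (perx_pdx (perx_pdx hgX)) p
  have b5 := perx_pdy (perx_pdy (perx_pdy (perx_pdx hgX))) p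
  have b6 := perx_pdy (perx_pdx (perx_pdx (perx_pdx hgX))) p
  simp only [bra]
  rw [a1, a2, a3, a4, a5, b1, b2, b3, b4, b5, b6]

lemma bra_perY (hfY : PerY f) (hgY : PerY g) : PerY (bra f g) := by
  intro p
  have a1 := pery_pdy (pery_pdx hfY) p
  have a2 := pery_pdy (pery_pdy (pery_pdy hfY)) p
  have a3 := pery_pdx (pery_pdx (pery_pdx hfY)) p
  have a4 := pery_pdy (pery_pdy hfY) p
  have a5 := pery_pdx (pery_pdx hfY) p
  have b1 := pery_pdy (pery_pdy (pery_pdy (pery_pdy hgY))) p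
  have b2 := pery_pdx (pery_pdx (pery_pdx (pery_pdx hgY))) p
  have b3 := pery_pdy (pery_pdy (pery_pdx hgY)) p
  have b4 := pery_pdy (pery_pdx (pery_pdx hgY)) p
  have b5 := pery_pdy (pery_pdy (pery_pdy (pery_pdx hgY))) p
  have b6 := pery_pdy (pery_pdx (pery_pdx (pery_pdx hgY))) p
  simp only [bra]
  rw [a1, a2, a3, a4, a5, b1, b2, b3, b4, b5, b6]

end brasym

section swap
variable {f g : ℝ × ℝ → ℝ}

lemma bra_swap (hf : ContDiff ℝ (⊤ : ℕ∞) f) (hg : ContDiff ℝ (⊤ : ℕ∞) g)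
    (hfs : ∀ p : ℝ × ℝ, f (p.2, p.1) = f p) (hgs : ∀ p : ℝ × ℝ, g (p.2, p.1) = g p) :
    ∀ p : ℝ × ℝ, bra f g (p.2, p.1) = -bra f g p := by
  have ef : (fun q : ℝ × ℝ => f (q.2, q.1)) = f := funext hfs
  have eg : (fun q : ℝ × ℝ => g (q.2, q.1)) = g := funext hgs
  have s1 : (fun p : ℝ × ℝ => pdy (pdx f) (p.2, p.1)) = pdy (pdx f) := by
    rw [show (fun p : ℝ × ℝ => pdy (pdx f) (p.2, p.1))
        = pdx (pdy (fun q : ℝ × ℝ => f (q.2, q.1))) from rfl, ef, pdx_pdy_comm hf]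
  have s2 : (fun p : ℝ × ℝ => pdy (pdy (pdy f)) (p.2, p.1)) = pdx (pdx (pdx f)) := by
    rw [show (fun p : ℝ × ℝ => pdy (pdy (pdy f)) (p.2, p.1))
        = pdx (pdx (pdx (fun q : ℝ × ℝ => f (q.2, q.1)))) from rfl, ef]
  have s3 : (fun p : ℝ × ℝ => pdx (pdx (pdx f)) (p.2, p.1)) = pdy (pdy (pdy f)) := by
    rw [show (fun p : ℝ × ℝ => pdx (pdx (pdx f)) (p.2, p.1))
        = pdy (pdy (pdy (fun q : ℝ × ℝ => f (q.2, q.1)))) from rfl, ef]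
  have s4 : (fun p : ℝ × ℝ => pdy (pdy f) (p.2, p.1)) = pdx (pdx f) := by
    rw [show (fun p : ℝ × ℝ => pdy (pdy f) (p.2, p.1))
        = pdx (pdx (fun q : ℝ × ℝ => f (q.2, q.1))) from rfl, ef]
  have s5 : (fun p : ℝ × ℝ => pdx (pdx f) (p.2, p.1)) = pdy (pdy f) := by
    rw [show (fun p : ℝ × ℝ => pdx (pdx f) (p.2, p.1))
        = pdy (pdy (fun q : ℝ × ℝ => f (q.2, q.1))) from rfl, ef]
  have s6 : (fun p : ℝ × ℝ => pdy (pdy (pdy (pdy g))) (p.2, p.1)) = pdx (pdx (pdx (pdx g))) := by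
    rw [show (fun p : ℝ × ℝ => pdy (pdy (pdy (pdy g))) (p.2, p.1))
        = pdx (pdx (pdx (pdx (fun q : ℝ × ℝ => g (q.2, q.1))))) from rfl, eg]
  have s7 : (fun p : ℝ × ℝ => pdx (pdx (pdx (pdx g))) (p.2, p.1)) = pdy (pdy (pdy (pdy g))) := by
    rw [show (fun p : ℝ × ℝ => pdx (pdx (pdx (pdx g))) (p.2, p.1))
        = pdy (pdy (pdy (pdy (fun q : ℝ × ℝ => g (q.2, q.1))))) from rfl, eg]
  have s8 : (fun p : ℝ × ℝ => pdy (pdy (pdx g)) (p.2, p.1)) = pdy (pdx (pdx g)) := by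
    rw [show (fun p : ℝ × ℝ => pdy (pdy (pdx g)) (p.2, p.1))
        = pdx (pdx (pdy (fun q : ℝ × ℝ => g (q.2, q.1)))) from rfl, eg,
      show pdx (pdx (pdy g)) = pdx (pdy (pdx g)) from congrArg pdx (pdx_pdy_comm hg),
      pdx_pdy_comm (contDiff_pdx hg)]
  have s9 : (fun p : ℝ × ℝ => pdy (pdx (pdx g)) (p.2, p.1)) = pdy (pdy (pdx g)) := by
    rw [show (fun p : ℝ × ℝ => pdy (pdx (pdx g)) (p.2, p.1))
        = pdx (pdy (pdy (fun q : ℝ × ℝ => g (q.2, q.1)))) from rfl, eg,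
      pdx_pdy_comm (contDiff_pdy hg),
      show pdy (pdx (pdy g)) = pdy (pdy (pdx g)) from congrArg pdy (pdx_pdy_comm hg)]
  have s10 : (fun p : ℝ × ℝ => pdy (pdy (pdy (pdx g))) (p.2, p.1)) = pdy (pdx (pdx (pdx g))) := by
    rw [show (fun p : ℝ × ℝ => pdy (pdy (pdy (pdx g))) (p.2, p.1))
        = pdx (pdx (pdx (pdy (fun q : ℝ × ℝ => g (q.2, q.1))))) from rfl, eg,
      show pdx (pdx (pdx (pdy g))) = pdx (pdx (pdy (pdx g)))
        from congrArg pdx (congrArg pdx (pdx_pdy_comm hg)),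
      show pdx (pdx (pdy (pdx g))) = pdx (pdy (pdx (pdx g)))
        from congrArg pdx (pdx_pdy_comm (contDiff_pdx hg)),
      pdx_pdy_comm (contDiff_pdx (contDiff_pdx hg))]
  have s11 : (fun p : ℝ × ℝ => pdy (pdx (pdx (pdx g))) (p.2, p.1)) = pdy (pdy (pdy (pdx g))) := by
    rw [show (fun p : ℝ × ℝ => pdy (pdx (pdx (pdx g))) (p.2, p.1))
        = pdx (pdy (pdy (pdy (fun q : ℝ × ℝ => g (q.2, q.1))))) from rfl, eg,
      pdx_pdy_comm (contDiff_pdy (contDiff_pdy hg)),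
      show pdy (pdx (pdy (pdy g))) = pdy (pdy (pdx (pdy g)))
        from congrArg pdy (pdx_pdy_comm (contDiff_pdy hg)),
      show pdy (pdy (pdx (pdy g))) = pdy (pdy (pdy (pdx g)))
        from congrArg pdy (congrArg pdy (pdx_pdy_comm hg))]
  intro p
  simp only [bra]
  rw [congrFun s1 p, congrFun s2 p, congrFun s3 p, congrFun s4 p, congrFun s5 p,
    congrFun s6 p, congrFun s7 p, congrFun s8 p, congrFun s9 p, congrFun s10 p,
    congrFun s11 p]
  ring

lemma bra_cont (hf : ContDiff ℝ (⊤ : ℕ∞) f) (hg : ContDiff ℝ (⊤ : ℕ∞) g) : Continuous (bra f g) := by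
  have c1 := (contDiff_pdy (contDiff_pdx hf)).continuous
  have c2 := (contDiff_pdy (contDiff_pdy (contDiff_pdy hf))).continuous
  have c3 := (contDiff_pdx (contDiff_pdx (contDiff_pdx hf))).continuous
  have c4 := (contDiff_pdy (contDiff_pdy hf)).continuous
  have c5 := (contDiff_pdx (contDiff_pdx hf)).continuous
  have d1 := (contDiff_pdy (contDiff_pdy (contDiff_pdy (contDiff_pdy hg)))).continuous
  have d2 := (contDiff_pdx (contDiff_pdx (contDiff_pdx (contDiff_pdx hg)))).continuous
  have d3 := (contDiff_pdy (contDiff_pdy (contDiff_pdx hg))).continuous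
  have d4 := (contDiff_pdy (contDiff_pdx (contDiff_pdx hg))).continuous
  have d5 := (contDiff_pdy (contDiff_pdy (contDiff_pdy (contDiff_pdx hg)))).continuous
  have d6 := (contDiff_pdy (contDiff_pdx (contDiff_pdx (contDiff_pdx hg)))).continuous
  unfold bra
  fun_prop

end swap

section integrals
open intervalIntegral MeasureTheory

lemma int_reflect (F G : ℝ → ℂ) (hF : ∀ x, F (x + 2 * π) = F x) (hG : ∀ x, G (x + 2 * π) = G x)
    (hrel : ∀ x, F (-x) = -G x) :
    ∫ x in (0:ℝ)..(2 * π), F x = -∫ x in (0:ℝ)..(2 * π), G x := by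
  have hpF : Function.Periodic F (2 * π) := hF
  have hpG : Function.Periodic G (2 * π) := hG
  have h1 := hpF.intervalIntegral_add_eq 0 (-π)
  have h2 := hpG.intervalIntegral_add_eq 0 (-π)
  rw [zero_add, show -π + 2 * π = π by ring] at h1 h2
  have h3 : ∫ x in (-π:ℝ)..π, F (-x) = ∫ x in (-π:ℝ)..π, F x := by
    simpa using intervalIntegral.integral_comp_neg (a := -π) (b := π) (f := F)
  have h4 : ∫ x in (-π:ℝ)..π, F (-x) = -∫ x in (-π:ℝ)..π, G x := by
    rw [intervalIntegral.integral_congr (g := fun x => -G x) (fun x _ => hrel x),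
      intervalIntegral.integral_neg]
  rw [h1, h2, ← h3, h4]

lemma int_zero_of_odd (F : ℝ → ℂ) (hF : ∀ x, F (x + 2 * π) = F x)
    (hodd : ∀ x, F (-x) = -F x) : ∫ x in (0:ℝ)..(2 * π), F x = 0 := by
  have := int_reflect F F hF hF hodd
  linear_combination (1/2 : ℂ) * this

lemma double_swap (K : ℝ × ℝ → ℂ) (hK : Continuous K) :
    ∫ x in (0:ℝ)..(2 * π), ∫ y in (0:ℝ)..(2 * π), K (x, y)
      = ∫ x in (0:ℝ)..(2 * π), ∫ y in (0:ℝ)..(2 * π), K (y, x) := by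
  have h2π : (0:ℝ) ≤ 2 * π := by positivity
  simp_rw [intervalIntegral.integral_of_le h2π]
  apply MeasureTheory.integral_integral_swap
  rw [show Function.uncurry (fun x y => K (x, y)) = K from rfl, Measure.prod_restrict]
  exact ((hK.continuousOn.integrableOn_compact (isCompact_Icc.prod isCompact_Icc)).mono_set
    (Set.prod_mono Set.Ioc_subset_Icc_self Set.Ioc_subset_Icc_self))

lemma exp_add_int (a : ℂ) (k : ℤ) :
    Complex.exp (a + (k:ℂ) * (2 * π) * Complex.I) = Complex.exp a := by
  rw [Complex.exp_add, show (k:ℂ) * (2 * π) * Complex.I = (k:ℂ) * (2 * π * Complex.I) by ring,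
    Complex.exp_int_mul_two_pi_mul_I, mul_one]

end integrals

theorem bracket_has_no_resonant_fourier_modes
    (f g : ℝ × ℝ → ℝ) (hf : ContDiff ℝ (⊤ : ℕ∞) f) (hg : ContDiff ℝ (⊤ : ℕ∞) g)
    (hfper : ∀ z : ℝ × ℝ, f (z.1 + 2 * Real.pi, z.2) = f z ∧ f (z.1, z.2 + 2 * Real.pi) = f z)
    (hgper : ∀ z : ℝ × ℝ, g (z.1 + 2 * Real.pi, z.2) = g z ∧ g (z.1, z.2 + 2 * Real.pi) = g z)
    (hfsym : ∀ z : ℝ × ℝ, f (-z.1, z.2) = f z ∧ f (z.1, -z.2) = f z ∧ f (z.2, z.1) = f z)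
    (hgsym : ∀ z : ℝ × ℝ, g (-z.1, z.2) = g z ∧ g (z.1, -z.2) = g z ∧ g (z.2, z.1) = g z) :
    ∀ m n : ℤ, m * n * (m - n) * (m + n) = 0 →
      ∫ x in (0 : ℝ)..(2 * Real.pi), ∫ y in (0 : ℝ)..(2 * Real.pi),
        (bra f g (x, y) : ℂ) * Complex.exp (-Complex.I * ((m : ℂ) * (x : ℂ) + (n : ℂ) * (y : ℂ)))
      = 0 := by
  have hOX : OdX (bra f g) := bra_odX (fun p => (hfsym p).1) (fun p => (hgsym p).1)
  have hOY : OdY (bra f g) := bra_odY (fun p => (hfsym p).2.1) (fun p => (hgsym p).2.1)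
  have hPX : PerX (bra f g) := bra_perX (fun p => (hfper p).1) (fun p => (hgper p).1)
  have hPY : PerY (bra f g) := bra_perY (fun p => (hfper p).2) (fun p => (hgper p).2)
  have hSw := bra_swap hf hg (fun p => (hfsym p).2.2) (fun p => (hgsym p).2.2)
  have hC : Continuous (bra f g) := bra_cont hf hg
  set h := bra f g with hh
  -- the diagonal case
  have diag : ∀ k : ℤ, (∫ x in (0:ℝ)..(2 * π), ∫ y in (0:ℝ)..(2 * π),
      (h (x, y) : ℂ) * Complex.exp (-Complex.I * ((k:ℂ) * (x:ℂ) + (k:ℂ) * (y:ℂ)))) = 0 := by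
    intro k
    set K : ℝ × ℝ → ℂ :=
      fun p => (h p : ℂ) * Complex.exp (-Complex.I * ((k:ℂ) * (p.1:ℂ) + (k:ℂ) * (p.2:ℂ))) with hK
    have hKc : Continuous K := by
      apply (Complex.continuous_ofReal.comp hC).mul
      fun_prop
    have e2 : ∀ x y : ℝ, K (y, x) = -K (x, y) := by
      intro x y
      have hs : h (y, x) = -h (x, y) := hSw (x, y)
      simp only [hK]
      rw [hs, Complex.ofReal_neg,
        show -Complex.I * ((k:ℂ) * (y:ℂ) + (k:ℂ) * (x:ℂ))
          = -Complex.I * ((k:ℂ) * (x:ℂ) + (k:ℂ) * (y:ℂ)) by ring]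
      ring
    have goal' : (∫ x in (0:ℝ)..(2 * π), ∫ y in (0:ℝ)..(2 * π), K (x, y)) = 0 := by
      have e1 := double_swap K hKc
      have e3 : (∫ x in (0:ℝ)..(2 * π), ∫ y in (0:ℝ)..(2 * π), K (y, x))
          = -∫ x in (0:ℝ)..(2 * π), ∫ y in (0:ℝ)..(2 * π), K (x, y) := by
        have inner : ∀ x : ℝ, (∫ y in (0:ℝ)..(2 * π), K (y, x))
            = -∫ y in (0:ℝ)..(2 * π), K (x, y) := by
          intro x
          rw [intervalIntegral.integral_congr (g := fun y => -K (x, y)) (fun y _ => e2 x y),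
            intervalIntegral.integral_neg]
        rw [intervalIntegral.integral_congr
          (g := fun x => -∫ y in (0:ℝ)..(2 * π), K (x, y)) (fun x _ => inner x),
          intervalIntegral.integral_neg]
      linear_combination (1/2 : ℂ) * (e1.trans e3)
    exact goal'
  intro m n hmn
  have hcase : m = 0 ∨ n = 0 ∨ m = n ∨ m = -n := by
    rcases mul_eq_zero.mp hmn with h' | h'
    · rcases mul_eq_zero.mp h' with h'' | h''
      · rcases mul_eq_zero.mp h'' with h3 | h3
        · exact Or.inl h3
        · exact Or.inr (Or.inl h3)
      · exact Or.inr (Or.inr (Or.inl (sub_eq_zero.mp h'')))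
    · exact Or.inr (Or.inr (Or.inr (eq_neg_of_add_eq_zero_left h')))
  rcases hcase with rfl | rfl | rfl | rfl
  · -- m = 0 : outer function is odd and periodic
    simp only [Int.cast_zero, zero_mul, zero_add]
    apply int_zero_of_odd
    · intro x
      apply intervalIntegral.integral_congr
      intro y _
      have hp : h (x + 2 * π, y) = h (x, y) := hPX (x, y)
      beta_reduce
      rw [hp]
    · intro x
      rw [intervalIntegral.integral_congr
        (g := fun y => -((h (x, y) : ℂ) * Complex.exp (-Complex.I * ((n:ℂ) * (y:ℂ)))))
        (fun y _ => by
          have ho : h (-x, y) = -h (x, y) := hOX (x, y)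
          beta_reduce
          rw [ho, Complex.ofReal_neg]
          ring),
        intervalIntegral.integral_neg]
  · -- n = 0 : inner integral vanishes
    simp only [Int.cast_zero, zero_mul, add_zero]
    have inner : ∀ x : ℝ,
        (∫ y in (0:ℝ)..(2 * π), (h (x, y) : ℂ) * Complex.exp (-Complex.I * ((m:ℂ) * (x:ℂ)))) = 0 := by
      intro x
      apply int_zero_of_odd
      · intro y
        have hp : h (x, y + 2 * π) = h (x, y) := hPY (x, y)
        beta_reduce
        rw [hp]
      · intro y
        have ho : h (x, -y) = -h (x, y) := hOY (x, y)
        beta_reduce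
        rw [ho, Complex.ofReal_neg]
        ring
    rw [intervalIntegral.integral_congr (g := fun _ => (0:ℂ)) (fun x _ => inner x)]
    simp
  · -- m = n : diagonal
    exact diag m
  · -- m = -n : reflect in y, then diagonal
    have inner : ∀ x : ℝ,
        (∫ y in (0:ℝ)..(2 * π),
          (h (x, y) : ℂ) * Complex.exp (-Complex.I * (((-n:ℤ):ℂ) * (x:ℂ) + (n:ℂ) * (y:ℂ))))
        = -∫ y in (0:ℝ)..(2 * π),
          (h (x, y) : ℂ) * Complex.exp (-Complex.I * (((-n:ℤ):ℂ) * (x:ℂ) + ((-n:ℤ):ℂ) * (y:ℂ))) := by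
      intro x
      apply int_reflect
      · intro y
        have hp : h (x, y + 2 * π) = h (x, y) := hPY (x, y)
        beta_reduce
        rw [hp, show -Complex.I * (((-n:ℤ):ℂ) * (x:ℂ) + (n:ℂ) * ((y + 2 * π : ℝ):ℂ))
            = -Complex.I * (((-n:ℤ):ℂ) * (x:ℂ) + (n:ℂ) * (y:ℂ)) + ((-n:ℤ):ℂ) * (2 * π) * Complex.I
          by push_cast; ring, exp_add_int]
      · intro y
        have hp : h (x, y + 2 * π) = h (x, y) := hPY (x, y)
        beta_reduce
        rw [hp, show -Complex.I * (((-n:ℤ):ℂ) * (x:ℂ) + ((-n:ℤ):ℂ) * ((y + 2 * π : ℝ):ℂ))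
            = -Complex.I * (((-n:ℤ):ℂ) * (x:ℂ) + ((-n:ℤ):ℂ) * (y:ℂ)) + (n:ℂ) * (2 * π) * Complex.I
          by push_cast; ring]
        rw [exp_add_int]
      · intro y
        have ho : h (x, -y) = -h (x, y) := hOY (x, y)
        beta_reduce
        rw [ho, Complex.ofReal_neg, show -Complex.I * (((-n:ℤ):ℂ) * (x:ℂ) + (n:ℂ) * ((-y : ℝ):ℂ))
            = -Complex.I * (((-n:ℤ):ℂ) * (x:ℂ) + ((-n:ℤ):ℂ) * (y:ℂ)) by push_cast; ring]
        ring
    rw [intervalIntegral.integral_congr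
      (g := fun x => -∫ y in (0:ℝ)..(2 * π),
        (h (x, y) : ℂ) * Complex.exp (-Complex.I * (((-n:ℤ):ℂ) * (x:ℂ) + ((-n:ℤ):ℂ) * (y:ℂ))))
      (fun x _ => inner x), intervalIntegral.integral_neg, diag (-n), neg_zero]
end aux
end
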